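/- For α = 1 (quadratic cost) and any y ≥ 0, the derivative of the best response φ(y) = (1/τ)·W(τ²·e^{-τy}) satisfies |φ'(y)| ≤ W(τ²)/(1 + W(τ²)) < 1, i.e., φ is a contraction with Lipschitz constant strictly less than 1 on [0,∞). -/
import Mathlib

/-- The Lambert W function on `[0,∞)`: the inverse of `x ↦ x * exp x` on `[0,∞)`. -/
noncomputable def lambertW (x : ℝ) : ℝ :=
  Function.invFunOn (fun t => t * Real.exp t) (Set.Ici 0) x

lemma lw_strictMonoOn : StrictMonoOn (fun t : ℝ => t * Real.exp t) (Set.Ici 0) := by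
  intro s hs t ht hst
  simp only [Set.mem_Ici] at hs ht
  have he := Real.exp_lt_exp.2 hst
  have h1 : s * Real.exp s ≤ s * Real.exp t := mul_le_mul_of_nonneg_left he.le hs
  have h2 : s * Real.exp t < t * Real.exp t := by
    have := Real.exp_pos t
    nlinarith
  simp only []
  linarith

lemma lambertW_spec {x : ℝ} (hx : 0 ≤ x) :
    0 ≤ lambertW x ∧ lambertW x * Real.exp (lambertW x) = x := by
  have hex : ∃ t ∈ Set.Ici (0:ℝ), (fun t => t * Real.exp t) t = x := by
    have hcont : ContinuousOn (fun t : ℝ => t * Real.exp t) (Set.Icc 0 x) :=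
      (continuous_id.mul Real.continuous_exp).continuousOn
    have h0x : (0:ℝ) ≤ x := hx
    have hmem : x ∈ Set.Icc ((fun t : ℝ => t * Real.exp t) 0) ((fun t : ℝ => t * Real.exp t) x) := by
      constructor
      · simpa using hx
      · have h1 : (1:ℝ) ≤ Real.exp x := Real.one_le_exp hx
        have := mul_le_mul_of_nonneg_left h1 hx
        simpa using this
    obtain ⟨t, ht, htx⟩ := intermediate_value_Icc h0x hcont hmem
    exact ⟨t, ht.1, htx⟩
  have h := Function.invFunOn_pos hex
  exact ⟨h.1, h.2⟩

lemma lambertW_nonneg {x : ℝ} (hx : 0 ≤ x) : 0 ≤ lambertW x := (lambertW_spec hx).1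

lemma lambertW_eq {x : ℝ} (hx : 0 ≤ x) : lambertW x * Real.exp (lambertW x) = x :=
  (lambertW_spec hx).2

lemma lambertW_pos {x : ℝ} (hx : 0 < x) : 0 < lambertW x := by
  rcases lt_or_eq_of_le (lambertW_nonneg hx.le) with h | h
  · exact h
  · exfalso
    have := lambertW_eq hx.le
    rw [← h] at this
    simp at this
    linarith
  
lemma lambertW_mono {x y : ℝ} (hx : 0 ≤ x) (hxy : x ≤ y) : lambertW x ≤ lambertW y := by
  by_contra h
  push_neg at h
  have := lw_strictMonoOn (Set.mem_Ici.2 (lambertW_nonneg (hx.trans hxy)))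
    (Set.mem_Ici.2 (lambertW_nonneg hx)) h
  simp only at this
  rw [lambertW_eq hx, lambertW_eq (hx.trans hxy)] at this
  linarith

lemma key (τ : ℝ) (hτ : 0 < τ) (y1 y2 : ℝ) (hy1 : 0 ≤ y1) (h12 : y1 ≤ y2) :
    0 ≤ lambertW (τ ^ 2 * Real.exp (-τ * y1)) - lambertW (τ ^ 2 * Real.exp (-τ * y2)) ∧
    lambertW (τ ^ 2 * Real.exp (-τ * y1)) - lambertW (τ ^ 2 * Real.exp (-τ * y2)) ≤
      lambertW (τ ^ 2) / (1 + lambertW (τ ^ 2)) * (τ * (y2 - y1)) := by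
  set a := lambertW (τ ^ 2 * Real.exp (-τ * y1)) with ha_def
  set b := lambertW (τ ^ 2 * Real.exp (-τ * y2)) with hb_def
  set w := lambertW (τ ^ 2) with hw_def
  have hx1 : 0 < τ ^ 2 * Real.exp (-τ * y1) := by positivity
  have hx2 : 0 < τ ^ 2 * Real.exp (-τ * y2) := by positivity
  have ha : a * Real.exp a = τ ^ 2 * Real.exp (-τ * y1) := lambertW_eq hx1.le
  have hb : b * Real.exp b = τ ^ 2 * Real.exp (-τ * y2) := lambertW_eq hx2.le
  have hapos : 0 < a := lambertW_pos hx1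
  have hbpos : 0 < b := lambertW_pos hx2
  have hba : b ≤ a := lambertW_mono hx2.le (by
    have : Real.exp (-τ * y2) ≤ Real.exp (-τ * y1) := by
      apply Real.exp_le_exp.2; nlinarith
    nlinarith)
  have haw : a ≤ w := by
    rw [ha_def, hw_def]
    have h1 : τ ^ 2 * Real.exp (-τ * y1) ≤ τ ^ 2 := by
      have : Real.exp (-τ * y1) ≤ 1 := Real.exp_le_one_iff.2 (by nlinarith)
      nlinarith
    have := lambertW_mono hx1.le h1
    simpa using this
  have hwpos : 0 < w := lt_of_lt_of_le hapos haw
  -- logs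
  have hla : Real.log a + a = Real.log (τ ^ 2) + (-τ * y1) := by
    have := congrArg Real.log ha
    rwa [Real.log_mul (ne_of_gt hapos) (Real.exp_ne_zero a), Real.log_exp,
      Real.log_mul (by positivity) (Real.exp_ne_zero _), Real.log_exp] at this
  have hlb : Real.log b + b = Real.log (τ ^ 2) + (-τ * y2) := by
    have := congrArg Real.log hb
    rwa [Real.log_mul (ne_of_gt hbpos) (Real.exp_ne_zero b), Real.log_exp,
      Real.log_mul (by positivity) (Real.exp_ne_zero _), Real.log_exp] at this
  have hsum : (Real.log a - Real.log b) + (a - b) = τ * (y2 - y1) := by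
    linear_combination hla - hlb
  have hlog : Real.log b - Real.log a ≤ b / a - 1 := by
    have h := Real.log_le_sub_one_of_pos (show 0 < b / a by positivity)
    rwa [Real.log_div (ne_of_gt hbpos) (ne_of_gt hapos)] at h
  have hlog2 : a - b ≤ (Real.log a - Real.log b) * a := by
    have hm := mul_le_mul_of_nonneg_right hlog hapos.le
    have hc : b / a * a = b := div_mul_cancel₀ b (ne_of_gt hapos)
    nlinarith [hm, hc]
  -- (a-b)(1+a)/a ≤ τ(y2-y1)
  have h1 : (a - b) * (1 + a) / a ≤ τ * (y2 - y1) := by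
    rw [div_le_iff₀ hapos]
    have hs' : (Real.log a - Real.log b) * a + (a - b) * a = τ * (y2 - y1) * a := by
      linear_combination hsum * a
    nlinarith [hlog2, hs']
  constructor
  · linarith
  · have h2 : a - b ≤ a / (1 + a) * (τ * (y2 - y1)) := by
      rw [div_mul_eq_mul_div, le_div_iff₀ (by linarith)]
      rw [div_le_iff₀ hapos] at h1
      nlinarith [h1]
    have h3 : a / (1 + a) ≤ w / (1 + w) := by
      rw [div_le_div_iff₀ (by linarith) (by linarith)]
      nlinarith
    have hy : 0 ≤ τ * (y2 - y1) := mul_nonneg hτ.le (by linarith)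
    calc a - b ≤ a / (1 + a) * (τ * (y2 - y1)) := h2
      _ ≤ w / (1 + w) * (τ * (y2 - y1)) := by apply mul_le_mul_of_nonneg_right h3 hy

/-- For quadratic cost (α = 1) and τ > 0, the best-response derivative is bounded:
`|φ'(y)| ≤ W(τ²)/(1+W(τ²)) < 1` for all `y ≥ 0`, and `φ` is a contraction with
Lipschitz constant strictly less than 1 on `[0,∞)`. -/
theorem best_response_contraction (τ : ℝ) (hτ : 0 < τ) :
    let φ : ℝ → ℝ := fun y => (1 / τ) * lambertW (τ ^ 2 * Real.exp (-τ * y))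
    let K : ℝ := lambertW (τ ^ 2) / (1 + lambertW (τ ^ 2))
    (∀ y : ℝ, 0 ≤ y →
      |(-(lambertW (τ ^ 2 * Real.exp (-τ * y)) /
          (1 + lambertW (τ ^ 2 * Real.exp (-τ * y)))))| ≤ K) ∧
    K < 1 ∧ LipschitzOnWith (Real.toNNReal K) φ (Set.Ici 0) := by
  intro φ K
  have hwpos : 0 < lambertW (τ ^ 2) := lambertW_pos (by positivity)
  set w := lambertW (τ ^ 2) with hw_def
  have hKnonneg : 0 ≤ K := by
    have : 0 < w / (1 + w) := by positivity
    exact this.le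
  refine ⟨?_, ?_, ?_⟩
  · intro y hy
    have hx : 0 < τ ^ 2 * Real.exp (-τ * y) := by positivity
    set a := lambertW (τ ^ 2 * Real.exp (-τ * y)) with ha_def
    have hapos : 0 < a := lambertW_pos hx
    have haw : a ≤ w := by
      rw [ha_def, hw_def]
      apply lambertW_mono hx.le
      have : Real.exp (-τ * y) ≤ 1 := Real.exp_le_one_iff.2 (by nlinarith)
      nlinarith
    rw [abs_neg, abs_of_nonneg (by positivity)]
    show a / (1 + a) ≤ w / (1 + w)
    rw [div_le_div_iff₀ (by linarith) (by linarith)]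
    nlinarith
  · show w / (1 + w) < 1
    rw [div_lt_one (by linarith)]
    linarith
  · rw [lipschitzOnWith_iff_dist_le_mul]
    intro y1 hy1 y2 hy2
    simp only [Set.mem_Ici] at hy1 hy2
    rw [Real.coe_toNNReal _ hKnonneg, Real.dist_eq, Real.dist_eq]
    have main : ∀ u v : ℝ, 0 ≤ u → u ≤ v → |φ u - φ v| ≤ K * |u - v| := by
      intro u v hu huv
      obtain ⟨hd1, hd2⟩ := key τ hτ u v hu huv
      have hφ : φ u - φ v = (1 / τ) *
          (lambertW (τ ^ 2 * Real.exp (-τ * u)) - lambertW (τ ^ 2 * Real.exp (-τ * v))) := by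
        simp only [φ]; ring
      rw [hφ, abs_of_nonneg (by positivity), abs_of_nonpos (by linarith), mul_comm K]
      rw [mul_comm (K) (τ * (v - u))] at hd2
      calc 1 / τ * (lambertW (τ ^ 2 * Real.exp (-τ * u)) - lambertW (τ ^ 2 * Real.exp (-τ * v)))
          ≤ 1 / τ * (τ * (v - u) * K) := by
            apply mul_le_mul_of_nonneg_left hd2 (by positivity)
        _ = -(u - v) * K := by field_simp; ring
    rcases le_total y1 y2 with h | h
    · exact main y1 y2 hy1 h
    · have := main y2 y1 hy2 h
      rw [abs_sub_comm (φ y2), abs_sub_comm y2] at this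
      exact this
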